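/- arXiv:2510.20619 — 3 statements merged into one kernel-verified Lean document; each statement's English description precedes it below -/
import Mathlib

section
/- Let ℓ be a natural number and W₁, W₂ ∈ ℂ^{ℓ×ℓ} be complex matrices such that the ℓ×2ℓ block matrix W = [W₁ W₂] has full row rank ℓ and the matrix W₁W₂* + W₂W₁* is positive semidefinite (where * denotes conjugate transpose). Then the linear relation ker[W₁ W₂] = {(f, g) ∈ ℂ^ℓ × ℂ^ℓ : W₁f + W₂g = 0} is maximally dissipative, i.e., Re⟨f, g⟩ ≤ 0 for every (f, g) ∈ ker[W₁ W₂], and every dissipative linear relation on ℂ^ℓ containing ker[W₁ W₂] equals ker[W₁ W₂]. -/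
open Matrix
open scoped ComplexOrder

/-- The linear relation `ker [W₁ W₂] = {(f, g) : W₁ f + W₂ g = 0}` on `ℂ^ℓ`. -/
noncomputable def kerRel {ℓ : ℕ} (W₁ W₂ : Matrix (Fin ℓ) (Fin ℓ) ℂ) :
    Submodule ℂ ((Fin ℓ → ℂ) × (Fin ℓ → ℂ)) :=
  LinearMap.ker
    (W₁.mulVecLin.comp (LinearMap.fst ℂ (Fin ℓ → ℂ) (Fin ℓ → ℂ)) +
      W₂.mulVecLin.comp (LinearMap.snd ℂ (Fin ℓ → ℂ) (Fin ℓ → ℂ)))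

/-- A linear relation `T` on `ℂ^ℓ` is dissipative if `Re ⟨f, g⟩ ≤ 0` for all `(f, g) ∈ T`,
where `⟨f, g⟩ = ∑ i, conj (f i) * g i` is the standard Hermitian inner product. -/
def IsDissipativeRel {ℓ : ℕ} (T : Submodule ℂ ((Fin ℓ → ℂ) × (Fin ℓ → ℂ))) : Prop :=
  ∀ p ∈ T, (star p.1 ⬝ᵥ p.2).re ≤ 0

/-- A linear relation is maximally dissipative if it is dissipative and every dissipative
linear relation containing it equals it. -/
def IsMaxDissipativeRel {ℓ : ℕ} (T : Submodule ℂ ((Fin ℓ → ℂ) × (Fin ℓ → ℂ))) : Prop :=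
  IsDissipativeRel T ∧ ∀ T' : Submodule ℂ ((Fin ℓ → ℂ) × (Fin ℓ → ℂ)),
    IsDissipativeRel T' → T ≤ T' → T' = T

/-!
The substitution `u = f - g`, `v = f + g` turns `W₁ f + W₂ g = 0` into `Q v + P u = 0` with
`Q = W₁ + W₂`, `P = W₁ - W₂`, and `4 Re ⟨f, g⟩ = |v|² - |u|²`. Now
`Q Qᴴ - P Pᴴ = 2 (W₁ W₂ᴴ + W₂ W₁ᴴ) ≥ 0`, and `Q Qᴴ ≥ [W₁ W₂] [W₁ W₂]ᴴ > 0` by the rank condition,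
so `Q` is invertible and `Q⁻¹ P` is a contraction: `|v| ≤ |u|`.

Maximality is a dimension count: `ker [W₁ W₂]` has dimension `ℓ`, while a dissipative relation
meets the diagonal `{(f, f)}` only in `0` and therefore has dimension at most `ℓ`.
-/

namespace Matrix

variable {𝕜 : Type*} [RCLike 𝕜] {m n p : Type*} [Fintype m] [Fintype n] [Fintype p]

theorem re_star_dotProduct_self_nonneg (x : n → 𝕜) : 0 ≤ RCLike.re (star x ⬝ᵥ x) :=
  (RCLike.nonneg_iff.mp (dotProduct_star_self_nonneg x)).1

theorem re_star_dotProduct_comm (x y : n → 𝕜) :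
    RCLike.re (star y ⬝ᵥ x) = RCLike.re (star x ⬝ᵥ y) := by
  rw [star_dotProduct, RCLike.star_def, RCLike.conj_re]

theorem re_star_add_dotProduct_add (x y : n → 𝕜) :
    RCLike.re (star (x + y) ⬝ᵥ (x + y)) =
      RCLike.re (star x ⬝ᵥ x) + 2 * RCLike.re (star x ⬝ᵥ y) + RCLike.re (star y ⬝ᵥ y) := by
  simp only [star_add, add_dotProduct, dotProduct_add, map_add, re_star_dotProduct_comm x y]
  ring

theorem re_star_sub_dotProduct_sub (x y : n → 𝕜) :
    RCLike.re (star (x - y) ⬝ᵥ (x - y)) =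
      RCLike.re (star x ⬝ᵥ x) - 2 * RCLike.re (star x ⬝ᵥ y) + RCLike.re (star y ⬝ᵥ y) := by
  simp only [star_sub, sub_dotProduct, dotProduct_sub, map_sub, re_star_dotProduct_comm x y]
  ring

theorem star_conjTranspose_mulVec_dotProduct (A : Matrix m n 𝕜) (w : m → 𝕜) (x : n → 𝕜) :
    star (Aᴴ *ᵥ w) ⬝ᵥ x = star w ⬝ᵥ A *ᵥ x := by
  rw [star_mulVec, conjTranspose_conjTranspose, dotProduct_mulVec]

/-- With `v = Qᴴ w` and `z = Pᴴ w` one has `|v|² = -⟨z, u⟩` and `|z|² ≤ |v|²`,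
so `0 ≤ |z + u|² ≤ |u|² - |v|²`. -/
theorem re_star_dotProduct_le_of_mulVec_add_mulVec_eq_zero {P : Matrix m p 𝕜} {Q : Matrix m n 𝕜}
    (hPQ : (Q * Qᴴ - P * Pᴴ).PosSemidef) {u : p → 𝕜} {w : m → 𝕜}
    (h : Q *ᵥ (Qᴴ *ᵥ w) + P *ᵥ u = 0) :
    RCLike.re (star (Qᴴ *ᵥ w) ⬝ᵥ Qᴴ *ᵥ w) ≤ RCLike.re (star u ⬝ᵥ u) := by
  set v := Qᴴ *ᵥ w
  set z := Pᴴ *ᵥ w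
  have hv : star v ⬝ᵥ v = star w ⬝ᵥ (Q * Qᴴ) *ᵥ w := by
    rw [star_conjTranspose_mulVec_dotProduct, mulVec_mulVec]
  have hz : star z ⬝ᵥ z = star w ⬝ᵥ (P * Pᴴ) *ᵥ w := by
    rw [star_conjTranspose_mulVec_dotProduct, mulVec_mulVec]
  have hzv : RCLike.re (star z ⬝ᵥ z) ≤ RCLike.re (star v ⬝ᵥ v) := by
    have := hPQ.re_dotProduct_nonneg w
    rw [sub_mulVec, dotProduct_sub, map_sub, ← hv, ← hz] at this
    linarith
  have hvu : RCLike.re (star v ⬝ᵥ v) = -RCLike.re (star z ⬝ᵥ u) := by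
    rw [star_conjTranspose_mulVec_dotProduct, star_conjTranspose_mulVec_dotProduct,
      eq_neg_of_add_eq_zero_right h, dotProduct_neg, map_neg, neg_neg]
  have := re_star_dotProduct_self_nonneg (z + u)
  rw [re_star_add_dotProduct_add] at this
  linarith

theorem isUnit_of_rank_eq_card {K : Type*} [Field K] [DecidableEq m] {A : Matrix m m K}
    (h : A.rank = Fintype.card m) : IsUnit A := by
  refine mulVec_surjective_iff_isUnit.mp ((LinearMap.range_eq_top (f := A.mulVecLin)).mp ?_)
  exact Submodule.eq_top_of_finrank_eq (by rw [Module.finrank_fintype_fun_eq_card]; exact h)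

theorem posDef_self_mul_conjTranspose_of_rank_eq_card [DecidableEq m] {A : Matrix m n 𝕜}
    (h : A.rank = Fintype.card m) : (A * Aᴴ).PosDef :=
  (posSemidef_self_mul_conjTranspose A).posDef_iff_isUnit.mpr
    (isUnit_of_rank_eq_card (by rwa [rank_self_mul_conjTranspose]))

theorem isUnit_add_of_rank_fromCols_eq_card [DecidableEq m] {W₁ W₂ : Matrix m m 𝕜}
    (hrank : (fromCols W₁ W₂).rank = Fintype.card m)
    (hpos : (W₁ * W₂ᴴ + W₂ * W₁ᴴ).PosSemidef) : IsUnit (W₁ + W₂) := by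
  have hW := posDef_self_mul_conjTranspose_of_rank_eq_card hrank
  rw [conjTranspose_fromCols_eq_fromRows_conjTranspose, fromCols_mul_fromRows] at hW
  have hsum : (W₁ + W₂) * (W₁ + W₂)ᴴ = (W₁ * W₁ᴴ + W₂ * W₂ᴴ) + (W₁ * W₂ᴴ + W₂ * W₁ᴴ) := by
    rw [conjTranspose_add]; noncomm_ring
  have hunit := (hW.add_posSemidef hpos).isUnit
  rw [← hsum, isUnit_iff_isUnit_det, det_mul, det_conjTranspose] at hunit
  exact (isUnit_iff_isUnit_det _).mpr (isUnit_of_mul_isUnit_left hunit)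

end Matrix

theorem mem_kerRel {ℓ : ℕ} {W₁ W₂ : Matrix (Fin ℓ) (Fin ℓ) ℂ} {p : (Fin ℓ → ℂ) × (Fin ℓ → ℂ)} :
    p ∈ kerRel W₁ W₂ ↔ W₁ *ᵥ p.1 + W₂ *ᵥ p.2 = 0 := by
  simp [kerRel]

theorem kerRel_eq_ker_fromCols {ℓ : ℕ} (W₁ W₂ : Matrix (Fin ℓ) (Fin ℓ) ℂ) :
    kerRel W₁ W₂ = LinearMap.ker ((fromCols W₁ W₂).mulVecLin ∘ₗ
      (LinearEquiv.sumArrowLequivProdArrow (Fin ℓ) (Fin ℓ) ℂ ℂ).symm.toLinearMap) := by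
  ext ⟨f, g⟩
  simp only [mem_kerRel, LinearMap.mem_ker, LinearMap.comp_apply, mulVecLin_apply,
    ← fromCols_mulVec_sumElim]
  rfl

theorem finrank_kerRel {ℓ : ℕ} {W₁ W₂ : Matrix (Fin ℓ) (Fin ℓ) ℂ}
    (hrank : (fromCols W₁ W₂).rank = ℓ) : Module.finrank ℂ (kerRel W₁ W₂) = ℓ := by
  rw [kerRel_eq_ker_fromCols]
  set φ := (fromCols W₁ W₂).mulVecLin ∘ₗ
    (LinearEquiv.sumArrowLequivProdArrow (Fin ℓ) (Fin ℓ) ℂ ℂ).symm.toLinearMap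
  have hrange : Module.finrank ℂ (LinearMap.range φ) = ℓ := by
    rw [LinearMap.range_comp_of_range_eq_top _ (LinearEquiv.range _)]
    exact hrank
  have := φ.finrank_range_add_finrank_ker
  simp only [hrange, Module.finrank_prod, Module.finrank_fin_fun] at this
  omega

theorem kerRel_isDissipativeRel {ℓ : ℕ} {W₁ W₂ : Matrix (Fin ℓ) (Fin ℓ) ℂ}
    (hrank : (fromCols W₁ W₂).rank = ℓ) (hpos : (W₁ * W₂ᴴ + W₂ * W₁ᴴ).PosSemidef) :
    IsDissipativeRel (kerRel W₁ W₂) := by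
  rintro ⟨f, g⟩ hfg
  rw [mem_kerRel] at hfg
  have hQ : IsUnit (W₁ + W₂)ᴴ := (isUnit_add_of_rank_fromCols_eq_card
    (by rwa [Fintype.card_fin]) hpos).star
  obtain ⟨w, hw⟩ := mulVec_surjective_iff_isUnit.mpr hQ (f + g)
  have hPQ : (W₁ + W₂) * (W₁ + W₂)ᴴ - (W₁ - W₂) * (W₁ - W₂)ᴴ =
      (W₁ * W₂ᴴ + W₂ * W₁ᴴ) + (W₁ * W₂ᴴ + W₂ * W₁ᴴ) := by
    rw [conjTranspose_add, conjTranspose_sub]; noncomm_ring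
  have hcayley : (W₁ + W₂) *ᵥ (f + g) + (W₁ - W₂) *ᵥ (f - g) = 2 • (W₁ *ᵥ f + W₂ *ᵥ g) := by
    simp only [add_mulVec, sub_mulVec, mulVec_add, mulVec_sub]; module
  have := re_star_dotProduct_le_of_mulVec_add_mulVec_eq_zero (hPQ ▸ hpos.add hpos)
    (u := f - g) (w := w) (by rw [hw, hcayley, hfg, smul_zero])
  rw [hw, re_star_add_dotProduct_add, re_star_sub_dotProduct_sub] at this
  simp only [RCLike.re_to_complex] at this
  linarith

theorem IsDissipativeRel.finrank_le {ℓ : ℕ} {T : Submodule ℂ ((Fin ℓ → ℂ) × (Fin ℓ → ℂ))}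
    (hT : IsDissipativeRel T) : Module.finrank ℂ T ≤ ℓ := by
  let S : T →ₗ[ℂ] Fin ℓ → ℂ := (LinearMap.fst ℂ _ _ - LinearMap.snd ℂ _ _) ∘ₗ T.subtype
  have hS : Function.Injective S := by
    rw [← LinearMap.ker_eq_bot, LinearMap.ker_eq_bot']
    rintro ⟨⟨f, g⟩, hp⟩ hfg
    obtain rfl : f = g := sub_eq_zero.mp hfg
    have hf : f = 0 := by
      by_contra hf
      exact (hT _ hp).not_gt (Complex.lt_def.mp (dotProduct_star_self_pos_iff.mpr hf)).1
    simp [hf]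
  simpa using LinearMap.finrank_le_finrank_of_injective hS

theorem IsDissipativeRel.isMaxDissipativeRel_of_finrank_eq {ℓ : ℕ}
    {T : Submodule ℂ ((Fin ℓ → ℂ) × (Fin ℓ → ℂ))} (hT : IsDissipativeRel T)
    (hdim : Module.finrank ℂ T = ℓ) : IsMaxDissipativeRel T :=
  ⟨hT, fun _ hT' hle =>
    (Submodule.eq_of_le_of_finrank_le hle (hT'.finrank_le.trans_eq hdim.symm)).symm⟩

theorem kerRel_isMaxDissipative (ℓ : ℕ) (W₁ W₂ : Matrix (Fin ℓ) (Fin ℓ) ℂ)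
    (hrank : (Matrix.fromCols W₁ W₂).rank = ℓ)
    (hpos : (W₁ * W₂ᴴ + W₂ * W₁ᴴ).PosSemidef) :
    IsMaxDissipativeRel (kerRel W₁ W₂) :=
  (kerRel_isDissipativeRel hrank hpos).isMaxDissipativeRel_of_finrank_eq (finrank_kerRel hrank)
end

section
/- Let k be a natural number and W_{B1}, W_{B2} ∈ ℂ^{2k×2k} be complex matrices such that W_{B1}W_{B2}* + W_{B2}W_{B1}* is positive definite (where * denotes conjugate transpose). Then W_{B2} is invertible. -/
open Matrix
open scoped ComplexOrder

/-- If `W_{B1} W_{B2}* + W_{B2} W_{B1}*` is positive definite, then `W_{B2}` is invertible. -/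
theorem invertible_of_posDef_sum (k : ℕ) (WB1 WB2 : Matrix (Fin (2 * k)) (Fin (2 * k)) ℂ)
    (hpos : (WB1 * WB2ᴴ + WB2 * WB1ᴴ).PosDef) :
    IsUnit WB2 := by
  rw [Matrix.isUnit_iff_isUnit_det, isUnit_iff_ne_zero]
  intro hdet
  have hdetH : (WB2ᴴ).det = 0 := by
    rw [Matrix.det_conjTranspose, hdet, star_zero]
  obtain ⟨x, hx, hxv⟩ := (Matrix.exists_mulVec_eq_zero_iff).mpr hdetH
  have h := hpos.dotProduct_mulVec_pos hx
  have hmul : (WB1 * WB2ᴴ + WB2 * WB1ᴴ) *ᵥ x = WB2 *ᵥ (WB1ᴴ *ᵥ x) := by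
    rw [Matrix.add_mulVec, ← Matrix.mulVec_mulVec, ← Matrix.mulVec_mulVec,
      hxv, Matrix.mulVec_zero, zero_add]
  rw [hmul, dotProduct_mulVec] at h
  have hstar : star x ᵥ* WB2 = 0 := by
    have := congrArg star hxv
    rw [Matrix.star_mulVec, Matrix.conjTranspose_conjTranspose] at this
    simpa using this
  rw [hstar, zero_dotProduct] at h
  exact lt_irrefl _ h
end

section
/- Let k, m be natural numbers with m ≤ 2k. Let W_{B,inp} ∈ ℂ^{m×4k}, W_{B,0} ∈ ℂ^{(2k−m)×4k}, let W_B ∈ ℂ^{2k×4k} be the vertical stack [W_{B,inp}; W_{B,0}], and let W_C ∈ ℂ^{2k×4k}. Let Σ ∈ ℂ^{4k×4k} be the block swap matrix [[0, I_{2k}], [I_{2k}, 0]], and set W_{C,out} := [I_m, 0_{m×(2k−m)}] W_C ∈ ℂ^{m×4k}. Assume the co-location condition: the Hermitian matrix Σ − [W_B; W_C]* Σ [W_B; W_C] is negative semidefinite, where [W_B; W_C] ∈ ℂ^{4k×4k} is the vertical stack of W_B and W_C. Then for every b₁, b₂ ∈ ℂ^{2k} and u ∈ ℂ^m such that, with b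 := (b₁, b₂) ∈ ℂ^{4k}, one has W_{B,inp} b = u and W_{B,0} b = 0, the identity Re⟨b₁, b₂⟩ − Re⟨u, W_{C,out} b⟩ = ½ b*(Σ − [W_B; W_C]* Σ [W_B; W_C]) b holds; in particular Re⟨b₁, b₂⟩ ≤ Re⟨u, W_{C,out} b⟩. -/
open Matrix
open scoped ComplexOrder

/-- Vertical stack `[A; B]` of an `m × n` and a `(2k − m) × n` matrix (with `m ≤ 2k`),
viewed as a `2k × n` matrix: the first `m` rows come from `A`, the remaining ones from `B`. -/
def vstack {n : Type*} {k m : ℕ} (A : Matrix (Fin m) n ℂ)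
    (B : Matrix (Fin (2 * k - m)) n ℂ) : Matrix (Fin (2 * k)) n ℂ :=
  Matrix.of fun i j =>
    if h : (i : ℕ) < m then A ⟨i, h⟩ j
    else B ⟨(i : ℕ) - m, by have := i.isLt; omega⟩ j

/-- The selector matrix `[I_m, 0_{m × (2k − m)}] ∈ ℂ^{m × 2k}`. -/
def selector (k m : ℕ) : Matrix (Fin m) (Fin (2 * k)) ℂ :=
  Matrix.of fun i j => if (j : ℕ) = (i : ℕ) then 1 else 0

/-!
With `W = [W_B; W_C]`, the form `b*(WᴴΣW)b` is `(Wb)*Σ(Wb)`, and `Σ` swaps the two halves,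
so its real part is `2 Re⟨W_B b, W_C b⟩`; likewise `Re b*Σb = 2 Re⟨b₁, b₂⟩`. The constraints on
`b` say exactly that `W_B b = [I_m, 0]ᴴ u`, which turns `⟨W_B b, W_C b⟩` into `⟨u, W_{C,out} b⟩`.
The inequality is then the sign of the quadratic form.
-/

section SwapForm

variable {R n : Type*} [NonAssocSemiring R] [Fintype n] [DecidableEq n]

theorem fromBlocks_zero_one_one_zero_mulVec_sumElim (x y : n → R) :
    fromBlocks (0 : Matrix n n R) 1 1 0 *ᵥ Sum.elim x y = Sum.elim y x := by
  simp [fromBlocks_mulVec]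

theorem star_sumElim_dotProduct_fromBlocks_zero_one_one_zero_mulVec [Star R] (x y : n → R) :
    star (Sum.elim x y) ⬝ᵥ fromBlocks (0 : Matrix n n R) 1 1 0 *ᵥ Sum.elim x y =
      star x ⬝ᵥ y + star y ⬝ᵥ x := by
  rw [fromBlocks_zero_one_one_zero_mulVec_sumElim, Function.star_sumElim,
    sumElim_dotProduct_sumElim]

end SwapForm

theorem star_dotProduct_conjTranspose_mul_mul_mulVec {R m n : Type*} [CommSemiring R]
    [StarRing R] [Fintype m] [Fintype n] (W : Matrix m n R) (S : Matrix m m R) (v : n → R) :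
    star v ⬝ᵥ (Wᴴ * S * W) *ᵥ v = star (W *ᵥ v) ⬝ᵥ S *ᵥ (W *ᵥ v) := by
  rw [← mulVec_mulVec, ← mulVec_mulVec, dotProduct_mulVec, ← star_mulVec]

theorem re_star_dotProduct_add_star_dotProduct {n : Type*} [Fintype n] (x y : n → ℂ) :
    (star x ⬝ᵥ y + star y ⬝ᵥ x).re = 2 * (star x ⬝ᵥ y).re := by
  rw [Complex.add_re, star_dotProduct y x, Complex.star_def, Complex.conj_re]
  ring

theorem re_star_sumElim_dotProduct_swap_sub_mulVec {n : Type*} [Fintype n] [DecidableEq n]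
    (W₁ W₂ : Matrix n (n ⊕ n) ℂ) (b₁ b₂ : n → ℂ) :
    (star (Sum.elim b₁ b₂) ⬝ᵥ (fromBlocks (0 : Matrix n n ℂ) 1 1 0 -
        (fromRows W₁ W₂)ᴴ * fromBlocks (0 : Matrix n n ℂ) 1 1 0 * fromRows W₁ W₂) *ᵥ
          Sum.elim b₁ b₂).re =
      2 * (star b₁ ⬝ᵥ b₂).re -
        2 * (star (W₁ *ᵥ Sum.elim b₁ b₂) ⬝ᵥ W₂ *ᵥ Sum.elim b₁ b₂).re := by
  rw [sub_mulVec, dotProduct_sub, Complex.sub_re, star_dotProduct_conjTranspose_mul_mul_mulVec,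
    fromRows_mulVec, star_sumElim_dotProduct_fromBlocks_zero_one_one_zero_mulVec,
    star_sumElim_dotProduct_fromBlocks_zero_one_one_zero_mulVec,
    re_star_dotProduct_add_star_dotProduct, re_star_dotProduct_add_star_dotProduct]

theorem conjTranspose_selector_mulVec_apply {k m : ℕ} (u : Fin m → ℂ) (i : Fin (2 * k)) :
    ((selector k m)ᴴ *ᵥ u) i = if h : (i : ℕ) < m then u ⟨i, h⟩ else 0 := by
  simp only [mulVec, dotProduct, conjTranspose_apply, selector, of_apply]
  split_ifs with h
  · rw [Fintype.sum_eq_single ⟨i, h⟩ fun j hj => by simp [Fin.ext_iff] at hj; simp [Ne.symm hj]]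
    simp
  · exact Finset.sum_eq_zero fun j _ => by simp [show (i : ℕ) ≠ j by omega]

theorem vstack_mulVec_apply {n : Type*} [Fintype n] {k m : ℕ} (A : Matrix (Fin m) n ℂ)
    (B : Matrix (Fin (2 * k - m)) n ℂ) (v : n → ℂ) (i : Fin (2 * k)) :
    (vstack A B *ᵥ v) i = if h : (i : ℕ) < m then (A *ᵥ v) ⟨i, h⟩
      else (B *ᵥ v) ⟨(i : ℕ) - m, by omega⟩ := by
  simp only [mulVec, dotProduct, vstack, of_apply]
  split_ifs <;> rfl

theorem vstack_mulVec_eq_conjTranspose_selector_mulVec {n : Type*} [Fintype n] {k m : ℕ}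
    {A : Matrix (Fin m) n ℂ} {B : Matrix (Fin (2 * k - m)) n ℂ} {v : n → ℂ} {u : Fin m → ℂ}
    (hA : A *ᵥ v = u) (hB : B *ᵥ v = 0) :
    vstack A B *ᵥ v = (selector k m)ᴴ *ᵥ u := by
  funext i
  rw [vstack_mulVec_apply, conjTranspose_selector_mulVec_apply, hA, hB]
  rfl

theorem re_star_dotProduct_mulVec_nonpos_of_posSemidef_neg {n : Type*} [Fintype n]
    {M : Matrix n n ℂ} (hM : (-M).PosSemidef) (x : n → ℂ) :
    (star x ⬝ᵥ M *ᵥ x).re ≤ 0 := by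
  have := (Complex.nonneg_iff.1 (hM.dotProduct_mulVec_nonneg x)).1
  rwa [neg_mulVec, dotProduct_neg, Complex.neg_re, neg_nonneg] at this

theorem colocated_energy_identity_general (k m : ℕ)
    (WBinp : Matrix (Fin m) (Fin (2 * k) ⊕ Fin (2 * k)) ℂ)
    (WB0 : Matrix (Fin (2 * k - m)) (Fin (2 * k) ⊕ Fin (2 * k)) ℂ)
    (WC : Matrix (Fin (2 * k)) (Fin (2 * k) ⊕ Fin (2 * k)) ℂ)
    -- the block swap matrix `Σ = [[0, I],[I, 0]]`
    (hneg : (-(Matrix.fromBlocks (0 : Matrix (Fin (2 * k)) (Fin (2 * k)) ℂ) 1 1 0 -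
        (Matrix.fromRows (vstack WBinp WB0) WC)ᴴ *
          Matrix.fromBlocks (0 : Matrix (Fin (2 * k)) (Fin (2 * k)) ℂ) 1 1 0 *
          Matrix.fromRows (vstack WBinp WB0) WC)).PosSemidef) :
    ∀ (b₁ b₂ : Fin (2 * k) → ℂ) (u : Fin m → ℂ),
      WBinp.mulVec (Sum.elim b₁ b₂) = u →
      WB0.mulVec (Sum.elim b₁ b₂) = 0 →
      (star b₁ ⬝ᵥ b₂).re - (star u ⬝ᵥ (selector k m * WC).mulVec (Sum.elim b₁ b₂)).re =
          (1 / 2 : ℝ) *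
            (star (Sum.elim b₁ b₂) ⬝ᵥ
              (Matrix.fromBlocks (0 : Matrix (Fin (2 * k)) (Fin (2 * k)) ℂ) 1 1 0 -
                  (Matrix.fromRows (vstack WBinp WB0) WC)ᴴ *
                    Matrix.fromBlocks (0 : Matrix (Fin (2 * k)) (Fin (2 * k)) ℂ) 1 1 0 *
                    Matrix.fromRows (vstack WBinp WB0) WC).mulVec
                (Sum.elim b₁ b₂)).re ∧
        (star b₁ ⬝ᵥ b₂).re ≤ (star u ⬝ᵥ (selector k m * WC).mulVec (Sum.elim b₁ b₂)).re := by
  intro b₁ b₂ u hu h0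
  have hquad := re_star_sumElim_dotProduct_swap_sub_mulVec (vstack WBinp WB0) WC b₁ b₂
  rw [vstack_mulVec_eq_conjTranspose_selector_mulVec hu h0, star_mulVec,
    conjTranspose_conjTranspose, ← dotProduct_mulVec, mulVec_mulVec] at hquad
  refine ⟨by rw [hquad]; ring, ?_⟩
  linarith [re_star_dotProduct_mulVec_nonpos_of_posSemidef_neg hneg (Sum.elim b₁ b₂)]

theorem colocated_energy_identity (k m : ℕ) (hm : m ≤ 2 * k)
    (WBinp : Matrix (Fin m) (Fin (2 * k) ⊕ Fin (2 * k)) ℂ)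
    (WB0 : Matrix (Fin (2 * k - m)) (Fin (2 * k) ⊕ Fin (2 * k)) ℂ)
    (WC : Matrix (Fin (2 * k)) (Fin (2 * k) ⊕ Fin (2 * k)) ℂ)
    -- the block swap matrix `Σ = [[0, I],[I, 0]]`
    (hneg : (-(Matrix.fromBlocks (0 : Matrix (Fin (2 * k)) (Fin (2 * k)) ℂ) 1 1 0 -
        (Matrix.fromRows (vstack WBinp WB0) WC)ᴴ *
          Matrix.fromBlocks (0 : Matrix (Fin (2 * k)) (Fin (2 * k)) ℂ) 1 1 0 *
          Matrix.fromRows (vstack WBinp WB0) WC)).PosSemidef) :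
    ∀ (b₁ b₂ : Fin (2 * k) → ℂ) (u : Fin m → ℂ),
      WBinp.mulVec (Sum.elim b₁ b₂) = u →
      WB0.mulVec (Sum.elim b₁ b₂) = 0 →
      (star b₁ ⬝ᵥ b₂).re - (star u ⬝ᵥ (selector k m * WC).mulVec (Sum.elim b₁ b₂)).re =
          (1 / 2 : ℝ) *
            (star (Sum.elim b₁ b₂) ⬝ᵥ
              (Matrix.fromBlocks (0 : Matrix (Fin (2 * k)) (Fin (2 * k)) ℂ) 1 1 0 -
                  (Matrix.fromRows (vstack WBinp WB0) WC)ᴴ *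
                    Matrix.fromBlocks (0 : Matrix (Fin (2 * k)) (Fin (2 * k)) ℂ) 1 1 0 *
                    Matrix.fromRows (vstack WBinp WB0) WC).mulVec
                (Sum.elim b₁ b₂)).re ∧
        (star b₁ ⬝ᵥ b₂).re ≤ (star u ⬝ᵥ (selector k m * WC).mulVec (Sum.elim b₁ b₂)).re :=
  colocated_energy_identity_general k m WBinp WB0 WC hneg
end
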